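/- arXiv:2512.21814 — 2 statements merged into one kernel-verified Lean document; each statement's English description precedes it below -/
import Mathlib

section
/- Let c1, c2 be constants with 0 ≤ 2c1 < c2 < 1. Then for all T ≥ 1, the double integral ∫_0^T ∫_0^T (s^{c1} + t^{c1}) / (1 + |s - t|^{c2}) ds dt is bounded by C · T^{1 + c1 + (1 - c2)} for a constant C depending only on c1 and c2. -/
/-!
Since `(1 + x) ^ c₂ ≤ 1 + x ^ c₂` for `0 ≤ c₂ ≤ 1`, on `[0, T]²` the integrand is at most
`2 T ^ c₁ (1 + |s - t|) ^ (-c₂)`. For every `s ∈ [0, T]` the integral of this kernel in `t` is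
at most twice `∫₀ᵀ (1 + u) ^ (-c₂) du ≲ T ^ (1 - c₂)`, so the double integral is
`≲ T · T ^ c₁ · T ^ (1 - c₂)`.
-/

open MeasureTheory

lemma Real.one_add_rpow_le_one_add_rpow {x p : ℝ} (hx : 0 ≤ x) (hp₀ : 0 ≤ p)
    (hp₁ : p ≤ 1) :
    (1 + x) ^ p ≤ 1 + x ^ p := by
  simpa using Real.rpow_add_le_add_rpow zero_le_one hx hp₀ hp₁

lemma Real.one_add_rpow_le_two_mul_rpow {T p : ℝ} (hT : 1 ≤ T) (hp₀ : 0 ≤ p)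
    (hp₁ : p ≤ 1) :
    (1 + T) ^ p ≤ 2 * T ^ p := by
  linarith [Real.one_le_rpow hT hp₀,
    Real.one_add_rpow_le_one_add_rpow (by linarith : (0 : ℝ) ≤ T) hp₀ hp₁]

lemma continuous_one_add_abs_rpow (c : ℝ) : Continuous fun u : ℝ => (1 + |u|) ^ c :=
  (continuous_const.add continuous_abs).rpow_const fun u => Or.inl (by positivity : (1 + |u|) ≠ 0)

lemma integral_one_add_rpow_neg_le {c T : ℝ} (hc : c < 1) :
    ∫ u in (0 : ℝ)..T, (1 + u) ^ (-c) ≤ (1 + T) ^ (1 - c) / (1 - c) := by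
  have hshift : ∫ u in (0 : ℝ)..T, (1 + u) ^ (-c) = ∫ v in (1 : ℝ)..1 + T, v ^ (-c) := by
    simpa using
      intervalIntegral.integral_comp_add_left (fun v : ℝ => v ^ (-c)) 1 (a := 0) (b := T)
  rw [hshift, integral_rpow (Or.inl (by linarith)), Real.one_rpow, neg_add_eq_sub]
  gcongr
  linarith

lemma integral_one_add_abs_rpow_neg_eq {c T : ℝ} (hT : 0 ≤ T) :
    ∫ u in -T..T, (1 + |u|) ^ (-c) = 2 * ∫ u in (0 : ℝ)..T, (1 + u) ^ (-c) := by
  have hint := (continuous_one_add_abs_rpow (-c)).intervalIntegrable (μ := volume)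
  have hneg : ∫ u in -T..0, (1 + |u|) ^ (-c) = ∫ u in (0 : ℝ)..T, (1 + |u|) ^ (-c) := by
    simpa using (intervalIntegral.integral_comp_neg (fun u : ℝ => (1 + |u|) ^ (-c))
      (a := 0) (b := T)).symm
  have habs : ∫ u in (0 : ℝ)..T, (1 + |u|) ^ (-c) = ∫ u in (0 : ℝ)..T, (1 + u) ^ (-c) :=
    intervalIntegral.integral_congr fun u hu => by
      rw [Set.uIcc_of_le hT] at hu
      rw [abs_of_nonneg hu.1]
  rw [← intervalIntegral.integral_add_adjacent_intervals (hint _ _) (hint _ _), hneg, habs]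
  ring

lemma integral_one_add_abs_sub_rpow_neg_le {c s T : ℝ} (hc : c < 1) (hs : s ∈ Set.Icc 0 T) :
    ∫ t in (0 : ℝ)..T, (1 + |s - t|) ^ (-c) ≤ 2 * (1 + T) ^ (1 - c) / (1 - c) := by
  have hT : 0 ≤ T := hs.1.trans hs.2
  calc ∫ t in (0 : ℝ)..T, (1 + |s - t|) ^ (-c)
      = ∫ u in s - T..s, (1 + |u|) ^ (-c) := by
        simpa using intervalIntegral.integral_comp_sub_left (fun u : ℝ => (1 + |u|) ^ (-c)) s
          (a := 0) (b := T)
    _ ≤ ∫ u in -T..T, (1 + |u|) ^ (-c) :=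
        intervalIntegral.integral_mono_interval (by linarith [hs.1]) (by linarith) hs.2
          (Filter.Eventually.of_forall fun u => Real.rpow_nonneg (by positivity) _)
          ((continuous_one_add_abs_rpow _).intervalIntegrable _ _)
    _ = 2 * ∫ u in (0 : ℝ)..T, (1 + u) ^ (-c) := integral_one_add_abs_rpow_neg_eq hT
    _ ≤ 2 * (1 + T) ^ (1 - c) / (1 - c) := by
        rw [mul_div_assoc]
        gcongr
        exact integral_one_add_rpow_neg_le hc

lemma rpow_add_rpow_div_one_add_abs_sub_rpow_le {c₁ c₂ s t T : ℝ} (hc₁ : 0 ≤ c₁)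
    (hc₂₀ : 0 ≤ c₂) (hc₂₁ : c₂ ≤ 1) (hs : s ∈ Set.Icc 0 T) (ht : t ∈ Set.Icc 0 T) :
    (s ^ c₁ + t ^ c₁) / (1 + |s - t| ^ c₂) ≤ 2 * T ^ c₁ * (1 + |s - t|) ^ (-c₂) := by
  have hnum : s ^ c₁ + t ^ c₁ ≤ 2 * T ^ c₁ := by
    linarith [Real.rpow_le_rpow hs.1 hs.2 hc₁, Real.rpow_le_rpow ht.1 ht.2 hc₁]
  rw [Real.rpow_neg (by positivity), ← div_eq_mul_inv]
  exact div_le_div₀ (mul_nonneg zero_le_two (Real.rpow_nonneg (hs.1.trans hs.2) _)) hnum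
    (by positivity) (Real.one_add_rpow_le_one_add_rpow (abs_nonneg _) hc₂₀ hc₂₁)

lemma norm_integral_rpow_add_rpow_div_one_add_abs_sub_rpow_le {c₁ c₂ s T : ℝ} (hc₁ : 0 ≤ c₁)
    (hc₂₀ : 0 ≤ c₂) (hc₂₁ : c₂ < 1) (hs : s ∈ Set.Icc 0 T) :
    ‖∫ t in (0 : ℝ)..T, (s ^ c₁ + t ^ c₁) / (1 + |s - t| ^ c₂)‖
      ≤ 4 * T ^ c₁ * (1 + T) ^ (1 - c₂) / (1 - c₂) := by
  have hT : 0 ≤ T := hs.1.trans hs.2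
  have hkernel : IntervalIntegrable (fun t => 2 * T ^ c₁ * (1 + |s - t|) ^ (-c₂)) volume 0 T :=
    (continuous_const.mul ((continuous_one_add_abs_rpow _).comp
      (continuous_const.sub continuous_id))).intervalIntegrable _ _
  calc ‖∫ t in (0 : ℝ)..T, (s ^ c₁ + t ^ c₁) / (1 + |s - t| ^ c₂)‖
      ≤ ∫ t in (0 : ℝ)..T, 2 * T ^ c₁ * (1 + |s - t|) ^ (-c₂) := by
        refine intervalIntegral.norm_integral_le_of_norm_le hT
          (Filter.Eventually.of_forall fun t ht => ?_) hkernel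
        have ht' : t ∈ Set.Icc 0 T := Set.Ioc_subset_Icc_self ht
        rw [Real.norm_of_nonneg (div_nonneg
          (add_nonneg (Real.rpow_nonneg hs.1 _) (Real.rpow_nonneg ht'.1 _)) (by positivity))]
        exact rpow_add_rpow_div_one_add_abs_sub_rpow_le hc₁ hc₂₀ hc₂₁.le hs ht'
    _ = 2 * T ^ c₁ * ∫ t in (0 : ℝ)..T, (1 + |s - t|) ^ (-c₂) :=
        intervalIntegral.integral_const_mul _ _
    _ ≤ 2 * T ^ c₁ * (2 * (1 + T) ^ (1 - c₂) / (1 - c₂)) := by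
        gcongr
        exact integral_one_add_abs_sub_rpow_neg_le hc₂₁ hs
    _ = 4 * T ^ c₁ * (1 + T) ^ (1 - c₂) / (1 - c₂) := by ring

theorem double_integral_kernel_bound (c1 c2 : ℝ) (hc1 : 0 ≤ c1) (hc12 : 2 * c1 < c2)
    (hc2 : c2 < 1) :
    ∃ C > 0, ∀ T : ℝ, 1 ≤ T →
      (∫ s in (0:ℝ)..T, ∫ t in (0:ℝ)..T, (s ^ c1 + t ^ c1) / (1 + |s - t| ^ c2))
        ≤ C * T ^ (1 + c1 + (1 - c2)) := by
  have hc2₀ : 0 ≤ c2 := by linarith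
  have h1c2 : 0 < 1 - c2 := by linarith
  refine ⟨8 / (1 - c2), by positivity, fun T hT => ?_⟩
  have hT₀ : 0 < T := by linarith
  have hinner : ∀ s ∈ Set.uIoc 0 T,
      ‖∫ t in (0 : ℝ)..T, (s ^ c1 + t ^ c1) / (1 + |s - t| ^ c2)‖
        ≤ 4 * T ^ c1 * (2 * T ^ (1 - c2)) / (1 - c2) := fun s hs => by
    rw [Set.uIoc_of_le hT₀.le] at hs
    refine (norm_integral_rpow_add_rpow_div_one_add_abs_sub_rpow_le hc1 hc2₀ hc2
      (Set.Ioc_subset_Icc_self hs)).trans ?_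
    gcongr
    exact Real.one_add_rpow_le_two_mul_rpow hT h1c2.le (by linarith)
  -- Bounding norms, rather than integrals, needs no integrability of the integrand.
  calc (∫ s in (0:ℝ)..T, ∫ t in (0:ℝ)..T, (s ^ c1 + t ^ c1) / (1 + |s - t| ^ c2))
      ≤ ‖∫ s in (0:ℝ)..T, ∫ t in (0:ℝ)..T, (s ^ c1 + t ^ c1) / (1 + |s - t| ^ c2)‖ :=
        Real.le_norm_self _
    _ ≤ 4 * T ^ c1 * (2 * T ^ (1 - c2)) / (1 - c2) * |T - 0| :=
        intervalIntegral.norm_integral_le_of_norm_le_const hinner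
    _ = 8 / (1 - c2) * T ^ (1 + c1 + (1 - c2)) := by
        rw [sub_zero, abs_of_pos hT₀, Real.rpow_add hT₀, Real.rpow_add hT₀, Real.rpow_one]
        ring
end

section
/- Under the hypotheses of the ergodic lemma (zero-mean process with |E[X_s X_t]| ≤ C (s^{c1}+t^{c1})/(1+|s-t|^{c2}), 0 ≤ 2c1 < c2 < 1, and 0 < ε < (c2-2c1)/4), setting Y_T = T^{-(1-ε)} ∫_0^T X_t dt, one has E[Y_T²] ≤ C' T^{-(c2 - c1 - 2ε)} for all T ≥ 1, where C' depends only on C, c1, c2. -/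
/-!
Fubini turns the second moment of `∫₀ᵀ X` into the double integral of the covariance over
`[0, T]²`. There the covariance is at most
`2 C T^{c1} (1 + |s - t|^{c2})⁻¹ ≤ 2 C T^{c1} |s - t|^{-c2}`, and
`∫₀ᵀ |s - t|^{-c2} dt ≤ 2 T^{1-c2} / (1 - c2)` for `c2 < 1`, so the second moment is
`O(T^{2 + c1 - c2})`; the normalisation `T^{-2(1-ε)}` gives the exponent `-(c2 - c1 - 2ε)`.
To apply Fubini, `X` is first replaced by a jointly measurable modification, obtained by
freezing the paths of an excluded null set.
-/

open MeasureTheory Set Function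

theorem abs_mul_le_add_sq_div_two (a b : ℝ) : |a * b| ≤ (a ^ 2 + b ^ 2) / 2 := by
  rw [abs_mul]
  nlinarith [sq_nonneg (|a| - |b|), sq_abs a, sq_abs b]

section ModifiedProcess

variable {Ω β : Type*} [MeasurableSpace Ω] {P : Measure Ω}
  [TopologicalSpace β] [TopologicalSpace.PseudoMetrizableSpace β] [MeasurableSpace β] [BorelSpace β]

theorem exists_measurable_uncurry_ae_eq_comp_max {X : ℝ → Ω → β} {a : ℝ}
    (hmeas : ∀ t, Measurable (X t)) (hcont : ∀ᵐ ω ∂P, ContinuousOn (fun t => X t ω) (Ici a)) :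
    ∃ Y : ℝ → Ω → β, Measurable (uncurry Y) ∧ ∀ᵐ ω ∂P, ∀ t, Y t ω = X (max t a) ω := by
  obtain ⟨N, hN_sub, hN, hPN⟩ := exists_measurable_superset_of_null (ae_iff.1 hcont)
  classical
  refine ⟨fun t ω => if ω ∈ N then X a ω else X (max t a) ω,
    measurable_uncurry_of_continuous_of_measurable (fun ω => ?_)
      (fun t => (hmeas a).ite hN (hmeas _)),
    (measure_eq_zero_iff_ae_notMem.1 hPN).mono fun ω hω t => if_neg hω⟩
  by_cases hω : ω ∈ N
  · simp only [if_pos hω, continuous_const]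
  · simp only [if_neg hω]
    have hc : ContinuousOn (fun t => X t ω) (Ici a) := by_contra fun h => hω (hN_sub h)
    exact hc.comp_continuous (continuous_id.max continuous_const) fun t => le_max_right t a

end ModifiedProcess

section SecondMoment

variable {Ω α : Type*} [MeasurableSpace Ω] [MeasurableSpace α] {P : Measure Ω} {μ : Measure α}
  {Y : α → Ω → ℝ}

theorem integral_sq_integral_eq_integral_integral_mul [SFinite P] [SFinite μ]
    (h : Integrable (fun q : Ω × α × α => Y q.2.1 q.1 * Y q.2.2 q.1) (P.prod (μ.prod μ))) :
    ∫ ω, (∫ t, Y t ω ∂μ) ^ 2 ∂P = ∫ p, ∫ ω, Y p.1 ω * Y p.2 ω ∂P ∂(μ.prod μ) := by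
  simp_rw [sq, ← integral_prod_mul]
  exact integral_integral_swap h

theorem integrable_mul_of_integral_sq_le [SFinite P] [IsFiniteMeasure μ]
    (hY : Measurable (uncurry Y)) (hY2 : ∀ t, Integrable (fun ω => Y t ω ^ 2) P) {V : ℝ}
    (hV : ∀ᵐ t ∂μ, ∫ ω, Y t ω ^ 2 ∂P ≤ V) :
    Integrable (fun q : Ω × α × α => Y q.2.1 q.1 * Y q.2.2 q.1) (P.prod (μ.prod μ)) := by
  have hmeas : Measurable (fun q : Ω × α × α => Y q.2.1 q.1 * Y q.2.2 q.1) := by fun_prop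
  have hYY : ∀ s t, Integrable (fun ω => Y s ω * Y t ω) P := fun s t =>
    (((hY2 s).add (hY2 t)).div_const 2).mono' (Measurable.aestronglyMeasurable (by fun_prop))
      (ae_of_all _ fun ω => abs_mul_le_add_sq_div_two _ _)
  have hbound : ∀ s t, ∫ ω, ‖Y s ω * Y t ω‖ ∂P
      ≤ (∫ ω, Y s ω ^ 2 ∂P + ∫ ω, Y t ω ^ 2 ∂P) / 2 := fun s t => by
    rw [← integral_add (hY2 s) (hY2 t), ← integral_div]
    exact integral_mono (hYY s t).norm (((hY2 s).add (hY2 t)).div_const 2)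
      fun ω => abs_mul_le_add_sq_div_two _ _
  refine (integrable_prod_iff' hmeas.aestronglyMeasurable).2
    ⟨ae_of_all _ fun p => hYY p.1 p.2, ?_⟩
  refine Integrable.of_bound
    hmeas.norm.stronglyMeasurable.integral_prod_left'.aestronglyMeasurable V ?_
  filter_upwards [Measure.quasiMeasurePreserving_fst.ae hV,
    Measure.quasiMeasurePreserving_snd.ae hV] with p h1 h2
  rw [Real.norm_of_nonneg (integral_nonneg fun _ => norm_nonneg _)]
  linarith [hbound p.1 p.2]

theorem integral_sq_integral_le [SFinite P] [IsFiniteMeasure μ]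
    (hY : Measurable (uncurry Y)) (hY2 : ∀ t, Integrable (fun ω => Y t ω ^ 2) P) {S : Set α}
    (hS : ∀ᵐ t ∂μ, t ∈ S) {V : ℝ} (hV : ∀ t ∈ S, ∫ ω, Y t ω ^ 2 ∂P ≤ V) {g : α × α → ℝ}
    (hg : Integrable g (μ.prod μ)) (hcov : ∀ s ∈ S, ∀ t ∈ S, ∫ ω, Y s ω * Y t ω ∂P ≤ g (s, t)) :
    ∫ ω, (∫ t, Y t ω ∂μ) ^ 2 ∂P ≤ ∫ p, g p ∂(μ.prod μ) := by
  have h := integrable_mul_of_integral_sq_le hY hY2 (hS.mono hV)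
  rw [integral_sq_integral_eq_integral_integral_mul h]
  refine integral_mono_ae h.integral_prod_right hg ?_
  filter_upwards [Measure.quasiMeasurePreserving_fst.ae hS,
    Measure.quasiMeasurePreserving_snd.ae hS] with p h1 h2 using hcov _ h1 _ h2

end SecondMoment

section Kernel

open intervalIntegral

variable {r : ℝ}

theorem locallyIntegrable_abs_rpow (hr : -1 < r) : LocallyIntegrable (fun x : ℝ => |x| ^ r) :=
  locallyIntegrable_of_norm_le_rpow (μ := volume) (by simp) (α := -r) (C := 1)
    (by rw [Module.finrank_self, Nat.cast_one]; linarith)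
    (ae_of_all _ fun x => by simp [abs_of_nonneg (Real.rpow_nonneg (abs_nonneg x) r)])
    (continuous_abs.measurable.pow_const r).aestronglyMeasurable

theorem intervalIntegrable_abs_sub_rpow (hr : -1 < r) (s a b : ℝ) :
    IntervalIntegrable (fun t => |s - t| ^ r) volume a b := by
  have h := ((locallyIntegrable_abs_rpow hr).integrableOn_isCompact
    (isCompact_uIcc (a := a - s) (b := b - s))).intervalIntegrable.comp_sub_right s
  simpa [abs_sub_comm] using h

theorem integral_abs_rpow_of_nonneg (hr : -1 < r) {a : ℝ} (ha : 0 ≤ a) :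
    ∫ u in 0..a, |u| ^ r = a ^ (r + 1) / (r + 1) := by
  rw [integral_congr fun u hu => by rw [abs_of_nonneg (uIcc_of_le ha ▸ hu).1],
    integral_rpow (Or.inl hr), Real.zero_rpow (by linarith), sub_zero]

theorem integral_abs_sub_rpow (hr : -1 < r) {t T : ℝ} (ht : t ∈ Icc 0 T) :
    ∫ s in 0..T, |t - s| ^ r = (t ^ (r + 1) + (T - t) ^ (r + 1)) / (r + 1) := by
  have hint : ∀ a b : ℝ, IntervalIntegrable (fun u => |u| ^ r) volume a b := by
    simpa using intervalIntegrable_abs_sub_rpow hr 0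
  rw [integral_comp_sub_left (fun u => |u| ^ r), sub_zero,
    ← integral_add_adjacent_intervals (hint _ 0) (hint 0 _),
    ← neg_neg (t - T), ← neg_zero, ← integral_comp_neg, neg_sub]
  simp_rw [abs_neg, neg_zero]
  rw [integral_abs_rpow_of_nonneg hr (sub_nonneg.2 ht.2), integral_abs_rpow_of_nonneg hr ht.1,
    add_div, add_comm]

theorem integral_abs_sub_rpow_le (hr : -1 < r) {t T : ℝ} (ht : t ∈ Icc 0 T) :
    ∫ s in 0..T, |t - s| ^ r ≤ 2 * T ^ (r + 1) / (r + 1) := by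
  rw [integral_abs_sub_rpow hr ht, two_mul]
  gcongr <;> linarith [ht.1, ht.2]

variable {c : ℝ}

theorem integrable_inv_one_add_abs_sub_rpow {ν : Measure (ℝ × ℝ)} [IsFiniteMeasure ν] :
    Integrable (fun p : ℝ × ℝ => (1 + |p.1 - p.2| ^ c)⁻¹) ν := by
  refine Integrable.of_bound (Measurable.aestronglyMeasurable (by fun_prop)) 1
    (ae_of_all _ fun p => ?_)
  have h : 0 ≤ |p.1 - p.2| ^ c := by positivity
  rw [Real.norm_of_nonneg (by positivity)]
  exact inv_le_one_of_one_le₀ (by linarith)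

theorem integral_inv_one_add_abs_sub_rpow_le (hc : c < 1) {s T : ℝ} (hs : s ∈ Icc 0 T) :
    ∫ t in 0..T, (1 + |s - t| ^ c)⁻¹ ≤ 2 * T ^ (1 - c) / (1 - c) := by
  have hr : -1 < -c := by linarith
  have hle : ∀ᵐ t, (1 + |s - t| ^ c)⁻¹ ≤ |s - t| ^ (-c) := by
    filter_upwards [Measure.ae_ne volume s] with t ht
    rw [Real.rpow_neg (abs_nonneg _)]
    have : 0 < |s - t| ^ c := Real.rpow_pos_of_pos (abs_pos.2 (sub_ne_zero.2 ht.symm)) c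
    exact inv_anti₀ this (by linarith)
  have hint := intervalIntegrable_abs_sub_rpow hr s 0 T
  have hint' : IntervalIntegrable (fun t => (1 + |s - t| ^ c)⁻¹) volume 0 T := by
    refine hint.mono_fun' (Measurable.aestronglyMeasurable (by fun_prop))
      (ae_restrict_of_ae (hle.mono fun t h => ?_))
    dsimp only
    rwa [Real.norm_of_nonneg (by positivity)]
  calc ∫ t in 0..T, (1 + |s - t| ^ c)⁻¹ ≤ ∫ t in 0..T, |s - t| ^ (-c) :=
        integral_mono_ae (hs.1.trans hs.2) hint' hint hle
    _ ≤ 2 * T ^ (1 - c) / (1 - c) := by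
        simpa only [neg_add_eq_sub] using integral_abs_sub_rpow_le hr hs

theorem integral_prod_inv_one_add_abs_sub_rpow_le (hc : c < 1) {T : ℝ} (hT : 0 ≤ T) :
    ∫ p, (1 + |p.1 - p.2| ^ c)⁻¹
        ∂((volume.restrict (Ioc 0 T)).prod (volume.restrict (Ioc 0 T)))
      ≤ 2 * T ^ (2 - c) / (1 - c) := by
  rw [integral_prod _ integrable_inv_one_add_abs_sub_rpow]
  calc ∫ s in Ioc 0 T, ∫ t in Ioc 0 T, (1 + |s - t| ^ c)⁻¹
      ≤ ∫ _ in Ioc 0 T, 2 * T ^ (1 - c) / (1 - c) := by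
        refine setIntegral_mono_on ?_ (integrable_const _) measurableSet_Ioc fun s hs => ?_
        · exact integrable_inv_one_add_abs_sub_rpow.integral_prod_left
        · rw [← integral_of_le hT]
          exact integral_inv_one_add_abs_sub_rpow_le hc (Ioc_subset_Icc_self hs)
    _ = 2 * T ^ (2 - c) / (1 - c) := by
        rw [setIntegral_const, Real.volume_real_Ioc_of_le hT, sub_zero, smul_eq_mul,
          show 2 - c = 1 + (1 - c) by ring, Real.rpow_add' hT (by linarith), Real.rpow_one]
        ring

end Kernel

theorem mul_rpow_add_rpow_div_le {c1 C s t T x : ℝ} (hc1 : 0 ≤ c1) (hC : 0 ≤ C)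
    (hs : s ∈ Icc 0 T) (ht : t ∈ Icc 0 T) (hx : 0 ≤ x) :
    C * (s ^ c1 + t ^ c1) / (1 + x) ≤ 2 * C * T ^ c1 * (1 + x)⁻¹ := by
  have hnum : C * (s ^ c1 + t ^ c1) ≤ 2 * C * T ^ c1 := by
    have := add_le_add (Real.rpow_le_rpow hs.1 hs.2 hc1) (Real.rpow_le_rpow ht.1 ht.2 hc1)
    nlinarith
  rw [div_eq_mul_inv]
  exact mul_le_mul_of_nonneg_right hnum (by positivity)

theorem integral_sq_setIntegral_Ioc_le {Ω : Type*} [MeasurableSpace Ω] {P : Measure Ω} [SFinite P]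
    {Y : ℝ → Ω → ℝ} (hY : Measurable (uncurry Y)) (hY2 : ∀ t, Integrable (fun ω => Y t ω ^ 2) P)
    {K c T : ℝ} (hK : 0 ≤ K) (hc : c < 1) (hT : 0 ≤ T)
    (hcov : ∀ s ∈ Ioc 0 T, ∀ t ∈ Ioc 0 T, ∫ ω, Y s ω * Y t ω ∂P ≤ K * (1 + |s - t| ^ c)⁻¹) :
    ∫ ω, (∫ t in Ioc 0 T, Y t ω) ^ 2 ∂P ≤ K * (2 * T ^ (2 - c) / (1 - c)) := by
  have hvar : ∀ t ∈ Ioc 0 T, ∫ ω, Y t ω ^ 2 ∂P ≤ K := fun t ht => by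
    have h := hcov t ht t ht
    rw [sub_self, abs_zero] at h
    simp_rw [sq]
    exact h.trans (mul_le_of_le_one_right hK
      (inv_le_one_of_one_le₀ (le_add_of_nonneg_right (by positivity))))
  refine (integral_sq_integral_le hY hY2 (ae_restrict_mem measurableSet_Ioc) hvar
    (integrable_inv_one_add_abs_sub_rpow.const_mul K) hcov).trans ?_
  rw [integral_const_mul]
  gcongr
  exact integral_prod_inv_one_add_abs_sub_rpow_le hc hT

theorem second_moment_time_average_general {Ω : Type*} [MeasurableSpace Ω] (P : Measure Ω)
    [IsProbabilityMeasure P]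
    (X : ℝ → Ω → ℝ) (c1 c2 C ε : ℝ)
    (hc1 : 0 ≤ c1) (hc2 : c2 < 1) (hC : 0 < C)
    (hmeas : ∀ t, Measurable (X t))
    (hcont : ∀ᵐ ω ∂P, ContinuousOn (fun t => X t ω) (Set.Ici 0))
    (hL2 : ∀ t, 0 ≤ t → Integrable (fun ω => (X t ω) ^ 2) P)
    (hcov : ∀ s, 0 ≤ s → ∀ t, 0 ≤ t →
      |∫ ω, X s ω * X t ω ∂P| ≤ C * (s ^ c1 + t ^ c1) / (1 + |s - t| ^ c2)) :
    ∃ C' > 0, ∀ T : ℝ, 1 ≤ T →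
      ∫ ω, (T ^ (-(1 - ε)) * ∫ t in (0:ℝ)..T, X t ω) ^ 2 ∂P
        ≤ C' * T ^ (-(c2 - c1 - 2 * ε)) := by
  obtain ⟨Y, hYm, hYX⟩ := exists_measurable_uncurry_ae_eq_comp_max hmeas hcont
  have hY2 : ∀ t, Integrable (fun ω => Y t ω ^ 2) P := fun t =>
    (hL2 _ (le_max_right t 0)).congr (hYX.mono fun ω h => by simp only [h])
  have hXY : ∀ᵐ ω ∂P, ∀ t, 0 ≤ t → Y t ω = X t ω :=
    hYX.mono fun ω h t ht => by rw [h, max_eq_left ht]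
  have h1c2 : 0 < 1 - c2 := by linarith
  refine ⟨4 * C / (1 - c2), by positivity, fun T hT => ?_⟩
  have hT0 : 0 < T := by linarith
  have hcovT : ∀ s ∈ Ioc 0 T, ∀ t ∈ Ioc 0 T,
      ∫ ω, Y s ω * Y t ω ∂P ≤ 2 * C * T ^ c1 * (1 + |s - t| ^ c2)⁻¹ := by
    intro s hs t ht
    rw [integral_congr_ae (hXY.mono fun ω h => by rw [h s hs.1.le, h t ht.1.le])]
    exact (le_abs_self _).trans ((hcov s hs.1.le t ht.1.le).trans
      (mul_rpow_add_rpow_div_le hc1 hC.le (Ioc_subset_Icc_self hs) (Ioc_subset_Icc_self ht)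
        (by positivity)))
  have hX : ∫ ω, (T ^ (-(1 - ε)) * ∫ t in (0:ℝ)..T, X t ω) ^ 2 ∂P
      = (T ^ (-(1 - ε))) ^ 2 * ∫ ω, (∫ t in Ioc 0 T, Y t ω) ^ 2 ∂P := by
    rw [← integral_const_mul]
    refine integral_congr_ae (hXY.mono fun ω h => ?_)
    simp only [mul_pow, intervalIntegral.integral_of_le hT0.le,
      setIntegral_congr_fun measurableSet_Ioc fun t ht => (h t ht.1.le).symm]
  have hpow : T ^ (-(c2 - c1 - 2 * ε)) = (T ^ (-(1 - ε))) ^ 2 * T ^ c1 * T ^ (2 - c2) := by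
    rw [sq, ← Real.rpow_add hT0, ← Real.rpow_add hT0, ← Real.rpow_add hT0]
    ring_nf
  rw [hX, hpow]
  calc _ ≤ (T ^ (-(1 - ε))) ^ 2 * (2 * C * T ^ c1 * (2 * T ^ (2 - c2) / (1 - c2))) := by
        gcongr
        exact integral_sq_setIntegral_Ioc_le hYm hY2 (by positivity) hc2 hT0.le hcovT
    _ = _ := by ring

theorem second_moment_time_average {Ω : Type*} [MeasurableSpace Ω] (P : Measure Ω)
    [IsProbabilityMeasure P]
    (X : ℝ → Ω → ℝ) (c1 c2 C ε : ℝ)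
    (hc1 : 0 ≤ c1) (hc12 : 2 * c1 < c2) (hc2 : c2 < 1) (hC : 0 < C)
    (hmeas : ∀ t, Measurable (X t))
    (hcont : ∀ᵐ ω ∂P, ContinuousOn (fun t => X t ω) (Set.Ici 0))
    (hL2 : ∀ t, 0 ≤ t → Integrable (fun ω => (X t ω) ^ 2) P)
    (hmean : ∀ t, 0 ≤ t → ∫ ω, X t ω ∂P = 0)
    (hcov : ∀ s, 0 ≤ s → ∀ t, 0 ≤ t →
      |∫ ω, X s ω * X t ω ∂P| ≤ C * (s ^ c1 + t ^ c1) / (1 + |s - t| ^ c2))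
    (hε : 0 < ε) (hε' : ε < (c2 - 2 * c1) / 4) :
    ∃ C' > 0, ∀ T : ℝ, 1 ≤ T →
      ∫ ω, (T ^ (-(1 - ε)) * ∫ t in (0:ℝ)..T, X t ω) ^ 2 ∂P
        ≤ C' * T ^ (-(c2 - c1 - 2 * ε)) :=
  second_moment_time_average_general P X c1 c2 C ε hc1 hc2 hC hmeas hcont hL2 hcov
end
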